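/- (Reduction of the iterative linear PDE (LFE) to the Lyapunov matrix equation, equation (5.5).) Let P_i and P⁺ be symmetric n×n real matrices. Define the policies u_i(x) = −R⁻¹·B₂ᵀ·P_i·x and w_i(x) = γ⁻²·B₁ᵀ·P_i·x, the closed-loop matrix Ā_i = A + γ⁻²·B₁·B₁ᵀ·P_i − B₂·R⁻¹·B₂ᵀ·P_i, and Q̄_i = Q − γ⁻²·P_i·B₁·B₁ᵀ·P_i + P_i·B₂·R⁻¹·B₂ᵀ·P_i. Then the quadratic function V(x) = ⟨x, P⁺·x⟩ satisfies the linear PDE ⟨2·P⁺·x, A·x + B₂·u_i(x) + B₁·w_i(x)⟩ + ‖C·x‖² + ⟨u_i(x), R·u_i(x)⟩ − γ²·‖w_i(x)‖² = 0 for all x ∈ ℝⁿ if and only if P⁺ satisfies the Lyapunov equation Ā_iᵀ·P⁺ + P⁺·Ā_i + Q̄_i = 0. -/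

import Mathlib

/-!
Substituting the two policies turns the drift into `Āᵢ x` and, using `R R⁻¹ = 1` and the
symmetry of `Pᵢ` and `P⁺`, the left-hand side of the PDE into the quadratic form of
`ĀᵢᵀP⁺ + P⁺Āᵢ + Q̄ᵢ`. This matrix is symmetric, and a symmetric matrix with vanishing quadratic
form is zero.
-/

open Matrix

/-- Matrix–vector multiplication, valued in Euclidean space. -/
noncomputable def mv {a b : ℕ} (M : Matrix (Fin a) (Fin b) ℝ)
    (v : EuclideanSpace ℝ (Fin b)) : EuclideanSpace ℝ (Fin a) :=
  WithLp.toLp 2 (M.mulVec v)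

theorem Matrix.IsSymm.transpose_mul_add_mul {α ι : Type*} [CommSemiring α] [Fintype ι]
    {P : Matrix ι ι α} (hP : P.IsSymm) (M : Matrix ι ι α) : (Mᵀ * P + P * M).IsSymm := by
  simp [IsSymm, transpose_mul, hP.eq, add_comm]

lemma mul_norm_inv_smul_sq {E : Type*} [NormedAddCommGroup E] [NormedSpace ℝ E] (a : ℝ) (v : E) :
    a * ‖a⁻¹ • v‖ ^ 2 = a⁻¹ * ‖v‖ ^ 2 := by
  have h := mul_inv_mul_cancel a⁻¹
  rw [inv_inv] at h
  rw [norm_smul, mul_pow, Real.norm_eq_abs, sq_abs, inv_pow]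
  linear_combination ‖v‖ ^ 2 * h

section mv

variable {k l r : ℕ}

lemma mv_eq_toEuclideanLin (M : Matrix (Fin k) (Fin l) ℝ) : mv M = M.toEuclideanLin := rfl

lemma add_mv (M N : Matrix (Fin k) (Fin l) ℝ) (x : EuclideanSpace ℝ (Fin l)) :
    mv (M + N) x = mv M x + mv N x := by
  simp [mv_eq_toEuclideanLin]

lemma sub_mv (M N : Matrix (Fin k) (Fin l) ℝ) (x : EuclideanSpace ℝ (Fin l)) :
    mv (M - N) x = mv M x - mv N x := by
  simp [mv_eq_toEuclideanLin]

lemma smul_mv (c : ℝ) (M : Matrix (Fin k) (Fin l) ℝ) (x : EuclideanSpace ℝ (Fin l)) :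
    mv (c • M) x = c • mv M x := by
  simp [mv_eq_toEuclideanLin]

lemma mv_smul (M : Matrix (Fin k) (Fin l) ℝ) (c : ℝ) (x : EuclideanSpace ℝ (Fin l)) :
    mv M (c • x) = c • mv M x :=
  map_smul M.toEuclideanLin c x

lemma mv_neg (M : Matrix (Fin k) (Fin l) ℝ) (x : EuclideanSpace ℝ (Fin l)) :
    mv M (-x) = -mv M x :=
  map_neg M.toEuclideanLin x

lemma mv_one (x : EuclideanSpace ℝ (Fin k)) : mv 1 x = x := by
  simp [mv_eq_toEuclideanLin]

lemma mv_mv (M : Matrix (Fin k) (Fin l) ℝ) (N : Matrix (Fin l) (Fin r) ℝ)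
    (x : EuclideanSpace ℝ (Fin r)) : mv M (mv N x) = mv (M * N) x := by
  simp [mv, mulVec_mulVec]

lemma inner_mv_left (M : Matrix (Fin k) (Fin l) ℝ) (x : EuclideanSpace ℝ (Fin l))
    (y : EuclideanSpace ℝ (Fin k)) : inner ℝ (mv M x) y = inner ℝ x (mv Mᵀ y) := by
  simp [mv, EuclideanSpace.inner_eq_star_dotProduct, dotProduct_mulVec, vecMul_transpose,
    dotProduct_comm]

lemma inner_mv_mv (M : Matrix (Fin k) (Fin l) ℝ) (N : Matrix (Fin k) (Fin r) ℝ)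
    (x : EuclideanSpace ℝ (Fin l)) (y : EuclideanSpace ℝ (Fin r)) :
    inner ℝ (mv M x) (mv N y) = inner ℝ x (mv (Mᵀ * N) y) := by
  rw [inner_mv_left, mv_mv]

lemma norm_mv_sq (M : Matrix (Fin k) (Fin l) ℝ) (x : EuclideanSpace ℝ (Fin l)) :
    ‖mv M x‖ ^ 2 = inner ℝ x (mv (Mᵀ * M) x) := by
  rw [← real_inner_self_eq_norm_sq, inner_mv_mv]

lemma inner_mv_transpose_self (M : Matrix (Fin k) (Fin k) ℝ) (x : EuclideanSpace ℝ (Fin k)) :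
    inner ℝ x (mv Mᵀ x) = inner ℝ x (mv M x) := by
  rw [← inner_mv_left, real_inner_comm]

lemma inner_two_smul_mv_mv {P : Matrix (Fin k) (Fin k) ℝ} (hP : P.IsSymm)
    (M : Matrix (Fin k) (Fin k) ℝ) (x : EuclideanSpace ℝ (Fin k)) :
    inner ℝ ((2 : ℝ) • mv P x) (mv M x) = inner ℝ x (mv (Mᵀ * P + P * M) x) := by
  have hsymm : inner ℝ x (mv (Mᵀ * P) x) = inner ℝ x (mv (P * M) x) := by
    rw [← inner_mv_transpose_self, transpose_mul, transpose_transpose, hP.eq]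
  rw [add_mv, inner_add_right, hsymm, real_inner_smul_left, inner_mv_mv, hP.eq]
  ring

lemma inner_neg_mv_inv_mv_neg_mv_inv {R : Matrix (Fin k) (Fin k) ℝ} (hR : IsUnit R.det)
    (y : EuclideanSpace ℝ (Fin k)) :
    inner ℝ (-(mv R⁻¹ y)) (mv R (-(mv R⁻¹ y))) = inner ℝ y (mv R⁻¹ y) := by
  rw [mv_neg, mv_mv, mul_nonsing_inv R hR, mv_one, inner_neg_neg, real_inner_comm]

lemma Matrix.IsSymm.forall_inner_mv_self_eq_zero_iff {S : Matrix (Fin k) (Fin k) ℝ}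
    (hS : S.IsSymm) : (∀ x, inner ℝ x (mv S x) = 0) ↔ S = 0 := by
  have hT : S.toEuclideanLin.IsSymmetric := isSymmetric_toEuclideanLin_iff.mpr (by simpa using hS)
  rw [← LinearEquiv.map_eq_zero_iff toEuclideanLin, ← hT.inner_map_self_eq_zero]
  exact forall_congr' fun x => by rw [real_inner_comm]; rfl

end mv

section closedLoop

variable {n m q p : ℕ} (A : Matrix (Fin n) (Fin n) ℝ) (B₁ : Matrix (Fin n) (Fin q) ℝ)
  (B₂ : Matrix (Fin n) (Fin m) ℝ) (C : Matrix (Fin p) (Fin n) ℝ) (R : Matrix (Fin m) (Fin m) ℝ)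
  (γ : ℝ) (Pi : Matrix (Fin n) (Fin n) ℝ)

noncomputable def closedLoopMatrix : Matrix (Fin n) (Fin n) ℝ :=
  A + (γ^2)⁻¹ • (B₁ * B₁ᵀ * Pi) - B₂ * R⁻¹ * B₂ᵀ * Pi

noncomputable def closedLoopCost : Matrix (Fin n) (Fin n) ℝ :=
  Cᵀ * C - (γ^2)⁻¹ • (Pi * B₁ * B₁ᵀ * Pi) + Pi * B₂ * R⁻¹ * B₂ᵀ * Pi

lemma mv_closedLoopMatrix (x : EuclideanSpace ℝ (Fin n)) :
    mv A x + mv B₂ (-(mv R⁻¹ (mv B₂ᵀ (mv Pi x)))) + mv B₁ ((γ^2)⁻¹ • mv B₁ᵀ (mv Pi x))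
      = mv (closedLoopMatrix A B₁ B₂ R γ Pi) x := by
  simp only [closedLoopMatrix, add_mv, sub_mv, smul_mv, mv_neg, mv_smul, mv_mv, Matrix.mul_assoc]
  abel

lemma isSymm_closedLoopCost (hR : R⁻¹.IsSymm) (hPi : Pi.IsSymm) :
    (closedLoopCost B₁ B₂ C R γ Pi).IsSymm := by
  simp [closedLoopCost, IsSymm, transpose_mul, Matrix.mul_assoc, hPi.eq, hR.eq]

lemma lfe_eq_inner_mv_lyapunov (hR : IsUnit R.det) (hPi : Pi.IsSymm)
    {Pplus : Matrix (Fin n) (Fin n) ℝ} (hPplus : Pplus.IsSymm) (x : EuclideanSpace ℝ (Fin n)) :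
    inner ℝ ((2:ℝ) • mv Pplus x)
          (mv A x + mv B₂ (-(mv R⁻¹ (mv B₂ᵀ (mv Pi x)))) + mv B₁ ((γ^2)⁻¹ • mv B₁ᵀ (mv Pi x)))
        + ‖mv C x‖^2
        + inner ℝ (-(mv R⁻¹ (mv B₂ᵀ (mv Pi x)))) (mv R (-(mv R⁻¹ (mv B₂ᵀ (mv Pi x)))))
        - γ^2 * ‖(γ^2)⁻¹ • mv B₁ᵀ (mv Pi x)‖^2
      = inner ℝ x (mv ((closedLoopMatrix A B₁ B₂ R γ Pi)ᵀ * Pplus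
          + Pplus * closedLoopMatrix A B₁ B₂ R γ Pi + closedLoopCost B₁ B₂ C R γ Pi) x) := by
  rw [mv_closedLoopMatrix, inner_two_smul_mv_mv hPplus, norm_mv_sq,
    inner_neg_mv_inv_mv_neg_mv_inv hR, mul_norm_inv_smul_sq, mv_mv, norm_mv_sq]
  simp only [closedLoopCost, add_mv, sub_mv, smul_mv, mv_mv, inner_mv_mv, inner_add_right,
    inner_sub_right, inner_smul_right, transpose_mul, transpose_transpose, hPi.eq,
    Matrix.mul_assoc]
  ring

end closedLoop

theorem lfe_iff_lyapunov_general {n m q p : ℕ}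
    (A : Matrix (Fin n) (Fin n) ℝ)
    (B₁ : Matrix (Fin n) (Fin q) ℝ)
    (B₂ : Matrix (Fin n) (Fin m) ℝ)
    (C : Matrix (Fin p) (Fin n) ℝ)
    (R : Matrix (Fin m) (Fin m) ℝ) (hR : R.PosDef)
    (γ : ℝ)
    (Pi Pplus : Matrix (Fin n) (Fin n) ℝ) (hPi : Pi.IsSymm) (hPplus : Pplus.IsSymm) :
    (∀ x : EuclideanSpace ℝ (Fin n),
        (inner ℝ ((2:ℝ) • mv Pplus x)
            (mv A x + mv B₂ (-(mv R⁻¹ (mv B₂ᵀ (mv Pi x))))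
              + mv B₁ ((γ^2)⁻¹ • mv B₁ᵀ (mv Pi x))) : ℝ)
          + ‖mv C x‖^2
          + (inner ℝ (-(mv R⁻¹ (mv B₂ᵀ (mv Pi x)))) (mv R (-(mv R⁻¹ (mv B₂ᵀ (mv Pi x))))) : ℝ)
          - γ^2 * ‖(γ^2)⁻¹ • mv B₁ᵀ (mv Pi x)‖^2 = 0)
      ↔ (A + (γ^2)⁻¹ • (B₁ * B₁ᵀ * Pi) - B₂ * R⁻¹ * B₂ᵀ * Pi)ᵀ * Pplus
          + Pplus * (A + (γ^2)⁻¹ • (B₁ * B₁ᵀ * Pi) - B₂ * R⁻¹ * B₂ᵀ * Pi)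
          + (Cᵀ * C - (γ^2)⁻¹ • (Pi * B₁ * B₁ᵀ * Pi) + Pi * B₂ * R⁻¹ * B₂ᵀ * Pi) = 0 := by
  have hRdet : IsUnit R.det := R.isUnit_iff_isUnit_det.mp hR.isUnit
  have hRinv : R⁻¹.IsSymm := isHermitian_iff_isSymm.mp hR.inv.isHermitian
  have hS := (hPplus.transpose_mul_add_mul (closedLoopMatrix A B₁ B₂ R γ Pi)).add
    (isSymm_closedLoopCost B₁ B₂ C R γ Pi hRinv hPi)
  simp_rw [lfe_eq_inner_mv_lyapunov A B₁ B₂ C R γ Pi hRdet hPi hPplus]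
  exact hS.forall_inner_mv_self_eq_zero_iff

/-- **Reduction of the iterative linear PDE (LFE) to the Lyapunov matrix equation
(equation (5.5)).**  With the policies `uᵢ(x) = -R⁻¹B₂ᵀPᵢx`, `wᵢ(x) = γ⁻²B₁ᵀPᵢx`, the
closed-loop matrix `Āᵢ = A + γ⁻²B₁B₁ᵀPᵢ - B₂R⁻¹B₂ᵀPᵢ` and
`Q̄ᵢ = Q - γ⁻²PᵢB₁B₁ᵀPᵢ + PᵢB₂R⁻¹B₂ᵀPᵢ` (`Q = CᵀC`), the quadratic function
`V(x) = ⟨x, P⁺x⟩` satisfies the linear PDE iff `P⁺` solves the Lyapunov equation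
`ĀᵢᵀP⁺ + P⁺Āᵢ + Q̄ᵢ = 0`. -/
theorem lfe_iff_lyapunov {n m q p : ℕ}
    (A : Matrix (Fin n) (Fin n) ℝ)
    (B₁ : Matrix (Fin n) (Fin q) ℝ)
    (B₂ : Matrix (Fin n) (Fin m) ℝ)
    (C : Matrix (Fin p) (Fin n) ℝ)
    (R : Matrix (Fin m) (Fin m) ℝ) (hR : R.PosDef)
    (γ : ℝ) (hγ : 0 < γ)
    (Pi Pplus : Matrix (Fin n) (Fin n) ℝ) (hPi : Pi.IsSymm) (hPplus : Pplus.IsSymm) :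
    (∀ x : EuclideanSpace ℝ (Fin n),
        (inner ℝ ((2:ℝ) • mv Pplus x)
            (mv A x + mv B₂ (-(mv R⁻¹ (mv B₂ᵀ (mv Pi x))))
              + mv B₁ ((γ^2)⁻¹ • mv B₁ᵀ (mv Pi x))) : ℝ)
          + ‖mv C x‖^2
          + (inner ℝ (-(mv R⁻¹ (mv B₂ᵀ (mv Pi x)))) (mv R (-(mv R⁻¹ (mv B₂ᵀ (mv Pi x))))) : ℝ)
          - γ^2 * ‖(γ^2)⁻¹ • mv B₁ᵀ (mv Pi x)‖^2 = 0)
      ↔ (A + (γ^2)⁻¹ • (B₁ * B₁ᵀ * Pi) - B₂ * R⁻¹ * B₂ᵀ * Pi)ᵀ * Pplus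
          + Pplus * (A + (γ^2)⁻¹ • (B₁ * B₁ᵀ * Pi) - B₂ * R⁻¹ * B₂ᵀ * Pi)
          + (Cᵀ * C - (γ^2)⁻¹ • (Pi * B₁ * B₁ᵀ * Pi) + Pi * B₂ * R⁻¹ * B₂ᵀ * Pi) = 0 :=
  lfe_iff_lyapunov_general A B₁ B₂ C R hR γ Pi Pplus hPi hPplus
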